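/- For every even integer t ≥ 6, with n = 6t + 3, k = 2t + 1, e = (3/2)t and f = 2, there exists an ascending partition P = [p_1, …, p_k] of n of size k with p_1 = ⋯ = p_e = 2 and p_{e+1} = ⋯ = p_{e+f} = 3, such that slack_j(P) ≥ 0 for all 1 ≤ j ≤ k − 1 and P is not equitable. -/

import Mathlib

/-!
With `t = 2u` we have `n = 12u + 3`, `k = 4u + 1` and `s = 18u + 6`; take the parts
`2^(3u), 3^2, 6^(u-2), 9`. An element of a `2`-part summing to `s` lies in
`[s - n, n] = [6u + 3, 12u + 3]` and is not `s / 2 = 9u + 3`. These `6u` numbers are exactly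
used up by the `3u` parts of size `2`, so each `3`-part must contain `9u + 3`, since three distinct
numbers below `6u + 3` sum to less than `s`; but the two `3`-parts cannot share it.
On each block of equal parts the slack is a concave quadratic in `j`.
-/

/-- `s^{n,k} = n(n+1)/(2k)`. -/
def sNK (n k : ℕ) : ℕ := n * (n + 1) / (2 * k)

/-- `slack_j(P) = Σ_{i=1}^{p_1+⋯+p_j} (n − i + 1) − j·s^{n,k}`. -/
def slack (n k : ℕ) (p : ℕ → ℕ) (j : ℕ) : ℤ :=
  (∑ i ∈ Finset.Icc 1 (∑ t ∈ Finset.Icc 1 j, p t), ((n : ℤ) - (i : ℤ) + 1))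
    - (j : ℤ) * (sNK n k : ℤ)

/-- `p` (on indices `1,…,k`) is an ascending partition of `n` of size `k`. -/
def IsAscPartition (n k : ℕ) (p : ℕ → ℕ) : Prop :=
  (∀ i, 1 ≤ i → i ≤ k → 1 ≤ p i) ∧
  (∀ i j, 1 ≤ i → i ≤ j → j ≤ k → p i ≤ p j) ∧
  ∑ i ∈ Finset.Icc 1 k, p i = n

/-- `p` is equitable: `{1,…,n}` partitions into sets `A_1,…,A_k` with `|A_i| = p_i`
and each element sum equal to `s^{n,k}`. -/
def Equitable (n k : ℕ) (p : ℕ → ℕ) : Prop :=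
  ∃ A : ℕ → Finset ℕ,
    (∀ i j, 1 ≤ i → i < j → j ≤ k → Disjoint (A i) (A j)) ∧
    (Finset.Icc 1 k).biUnion A = Finset.Icc 1 n ∧
    (∀ i, 1 ≤ i → i ≤ k → (A i).card = p i) ∧
    (∀ i, 1 ≤ i → i ≤ k → ∑ x ∈ A i, x = sNK n k)

open Finset

theorem two_mul_sum_Icc_sub_add_one (n M : ℕ) :
    2 * ∑ i ∈ Icc 1 M, ((n : ℤ) - i + 1) = M * (2 * n + 1 - M) := by
  induction M with
  | zero => simp
  | succ M ih =>
    rw [sum_Icc_succ_top (Nat.le_add_left 1 M), mul_add, ih]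
    push_cast
    ring

theorem two_mul_slack (n k : ℕ) (p : ℕ → ℕ) (j : ℕ) :
    2 * slack n k p j =
      (∑ i ∈ Icc 1 j, p i : ℕ) * (2 * n + 1 - (∑ i ∈ Icc 1 j, p i : ℕ)) - 2 * j * sNK n k := by
  rw [slack, mul_sub, two_mul_sum_Icc_sub_add_one]
  ring

def band (c m : ℕ) : Finset ℕ := (Icc (c - m) (c + m)).erase c

section Band

variable {c m : ℕ} {B : Finset ℕ}

theorem card_band_le (c m : ℕ) : (band c m).card ≤ 2 * m := by
  rw [band, card_erase_of_mem (mem_Icc.2 ⟨Nat.sub_le c m, Nat.le_add_right c m⟩), Nat.card_Icc]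
  omega

theorem subset_band_of_card_eq_two (hB : B ⊆ Icc 1 (c + m)) (hcard : B.card = 2)
    (hsum : ∑ x ∈ B, x = 2 * c) : B ⊆ band c m := by
  obtain ⟨a, b, hab, rfl⟩ := card_eq_two.1 hcard
  rw [sum_pair hab] at hsum
  have ha := mem_Icc.1 (hB (mem_insert_self a {b}))
  have hb := mem_Icc.1 (hB (mem_insert_of_mem (mem_singleton_self b)))
  intro x hx
  rw [mem_insert, mem_singleton] at hx
  rw [band, mem_erase, mem_Icc]
  omega

theorem sum_add_six_le_of_card_eq_three {d : ℕ} (hcard : B.card = 3) (hlt : ∀ x ∈ B, x < d) :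
    ∑ x ∈ B, x + 6 ≤ 3 * d := by
  obtain ⟨a, b, e, hab, hae, hbe, rfl⟩ := card_eq_three.1 hcard
  rw [sum_insert (by simp [hab, hae]), sum_pair hbe]
  have := hlt a (by simp)
  have := hlt b (by simp)
  have := hlt e (by simp)
  omega

theorem mem_of_card_eq_three_of_disjoint_band (hB : B ⊆ Icc 1 (c + m)) (hcard : B.card = 3)
    (hsum : ∑ x ∈ B, x = 2 * c) (hdisj : Disjoint B (band c m)) (hc : c < 3 * m + 6) : c ∈ B := by
  by_contra hcB
  have hlt : ∀ x ∈ B, x < c - m := by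
    intro x hx
    have hx₁ := mem_Icc.1 (hB hx)
    have hx₂ : x ∉ band c m := disjoint_left.1 hdisj hx
    rw [band, mem_erase, mem_Icc] at hx₂
    have : x ≠ c := fun h => hcB (h ▸ hx)
    omega
  have := sum_add_six_le_of_card_eq_three hcard hlt
  omega

theorem biUnion_eq_band {A : ℕ → Finset ℕ} (hdisj : (Icc 1 m : Set ℕ).PairwiseDisjoint A)
    (hsub : ∀ i ∈ Icc 1 m, A i ⊆ band c m) (hcard : ∀ i ∈ Icc 1 m, (A i).card = 2) :
    (Icc 1 m).biUnion A = band c m := by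
  refine eq_of_subset_of_card_le (biUnion_subset.2 hsub) ?_
  rw [card_biUnion hdisj, sum_congr rfl hcard, sum_const, Nat.card_Icc, smul_eq_mul]
  have := card_band_le c m
  omega

end Band

theorem not_equitable_of_two_three {n k c m : ℕ} {p : ℕ → ℕ} (hs : sNK n k = 2 * c)
    (hn : n = c + m) (hc : c < 3 * m + 6) (hk : m + 2 ≤ k)
    (hp₂ : ∀ i, 1 ≤ i → i ≤ m → p i = 2) (hp₃ : ∀ i, m < i → i ≤ m + 2 → p i = 3) :
    ¬ Equitable n k p := by
  rintro ⟨A, hdisj, hcover, hcard, hsum⟩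
  subst hn
  have hsub : ∀ i, 1 ≤ i → i ≤ k → A i ⊆ Icc 1 (c + m) := fun i h₁ h₂ =>
    hcover ▸ subset_biUnion_of_mem A (mem_Icc.2 ⟨h₁, h₂⟩)
  have hpairs : (Icc 1 m).biUnion A = band c m := by
    refine biUnion_eq_band (fun i hi j hj hij => ?_) (fun i hi => ?_) (fun i hi => ?_) <;>
      simp only [coe_Icc, Set.mem_Icc, mem_Icc] at hi
    · simp only [coe_Icc, Set.mem_Icc] at hj
      rcases hij.lt_or_gt with h | h
      · exact hdisj i j hi.1 h (by omega)
      · exact (hdisj j i hj.1 h (by omega)).symm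
    · exact subset_band_of_card_eq_two (hsub i hi.1 (by omega))
        ((hcard i hi.1 (by omega)).trans (hp₂ i hi.1 hi.2)) (hs ▸ hsum i hi.1 (by omega))
    · exact (hcard i hi.1 (by omega)).trans (hp₂ i hi.1 hi.2)
  have hmid : ∀ i, m < i → i ≤ m + 2 → c ∈ A i := by
    intro i h₁ h₂
    refine mem_of_card_eq_three_of_disjoint_band (hsub i (by omega) (by omega))
      ((hcard i (by omega) (by omega)).trans (hp₃ i h₁ h₂)) (hs ▸ hsum i (by omega) (by omega))
      (hpairs ▸ (disjoint_biUnion_right _ _ _).2 fun j hj => ?_) hc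
    rw [mem_Icc] at hj
    exact (hdisj j i hj.1 (by omega) (by omega)).symm
  exact disjoint_left.1 (hdisj (m + 1) (m + 2) (by omega) (by omega) hk)
    (hmid (m + 1) (by omega) (by omega)) (hmid (m + 2) (by omega) le_rfl)

theorem sNK_twelve_mul_add_three (u : ℕ) : sNK (12 * u + 3) (4 * u + 1) = 18 * u + 6 := by
  unfold sNK
  rw [show (12 * u + 3) * (12 * u + 3 + 1) = 2 * (4 * u + 1) * (18 * u + 6) by ring]
  exact Nat.mul_div_cancel_left _ (by omega)

def counterPartition (u i : ℕ) : ℕ :=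
  if i ≤ 3 * u then 2 else if i ≤ 3 * u + 2 then 3 else if i ≤ 4 * u then 6 else 9

namespace counterPartition

variable {u : ℕ}

theorem monotone (u : ℕ) : Monotone (counterPartition u) := by
  intro i j hij
  simp only [counterPartition]
  split_ifs <;> omega

/- The three truncated differences add the jumps `2 → 3`, `3 → 6`, `6 → 9` of the parts. -/
theorem sum_Icc (hu : 2 ≤ u) (j : ℕ) :
    ∑ i ∈ Icc 1 j, counterPartition u i =
      2 * j + (j - 3 * u) + 3 * (j - (3 * u + 2)) + 3 * (j - 4 * u) := by
  induction j with
  | zero => simp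
  | succ j ih =>
    rw [sum_Icc_succ_top (Nat.le_add_left 1 j), ih, counterPartition]
    split_ifs <;> omega

theorem isAscPartition (hu : 2 ≤ u) :
    IsAscPartition (12 * u + 3) (4 * u + 1) (counterPartition u) := by
  refine ⟨fun i _ _ => ?_, fun i j _ hij _ => monotone u hij, ?_⟩
  · simp only [counterPartition]
    split_ifs <;> omega
  · rw [sum_Icc hu]
    omega

theorem slack_nonneg (hu : 3 ≤ u) {j : ℕ} (hj : j ≤ 4 * u) :
    0 ≤ slack (12 * u + 3) (4 * u + 1) (counterPartition u) j := by
  rw [← mul_nonneg_iff_of_pos_left (two_pos : (0 : ℤ) < 2), two_mul_slack,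
    sNK_twelve_mul_add_three, sum_Icc (by omega)]
  have hu' : (3 : ℤ) ≤ u := by exact_mod_cast hu
  rcases le_or_gt j (3 * u) with hj₁ | hj₁
  · rw [show 2 * j + (j - 3 * u) + 3 * (j - (3 * u + 2)) + 3 * (j - 4 * u) = 2 * j by omega]
    have : (j : ℤ) ≤ 3 * u := by exact_mod_cast hj₁
    push_cast
    nlinarith [mul_nonneg (Int.natCast_nonneg j) (by linarith : (0 : ℤ) ≤ 3 * u - j)]
  obtain rfl | ⟨r, rfl⟩ : j = 3 * u + 1 ∨ ∃ r, j = 3 * u + 2 + r := by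
    rcases Nat.eq_or_lt_of_le hj₁ with h | h
    · exact .inl h.symm
    · exact .inr ⟨j - (3 * u + 2), by omega⟩
  · rw [show 2 * (3 * u + 1) + (3 * u + 1 - 3 * u) + 3 * (3 * u + 1 - (3 * u + 2)) +
      3 * (3 * u + 1 - 4 * u) = 6 * u + 3 by omega]
    push_cast
    nlinarith
  · rw [show 2 * (3 * u + 2 + r) + (3 * u + 2 + r - 3 * u) + 3 * (3 * u + 2 + r - (3 * u + 2)) +
      3 * (3 * u + 2 + r - 4 * u) = 6 * u + 6 + 6 * r by omega]
    -- twice the slack is `6u - 18 + 30r + 36r(u - 2 - r)`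
    have : (r : ℤ) + 2 ≤ u := by exact_mod_cast (by omega : r + 2 ≤ u)
    push_cast
    nlinarith [mul_nonneg (Int.natCast_nonneg r) (by linarith : (0 : ℤ) ≤ u - 2 - r)]

theorem not_equitable (hu : 1 ≤ u) : ¬ Equitable (12 * u + 3) (4 * u + 1) (counterPartition u) :=
  not_equitable_of_two_three (c := 9 * u + 3) (m := 3 * u)
    (by rw [sNK_twelve_mul_add_three]; ring) (by ring) (by omega) (by omega)
    (fun i _ hi => if_pos hi)
    (fun i h₁ h₂ => by simp only [counterPartition]; split_ifs <;> omega)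

end counterPartition

theorem statement11 (t : ℕ) (ht : Even t) (ht6 : 6 ≤ t) (e : ℕ) (he : 2 * e = 3 * t) :
    ∃ p : ℕ → ℕ,
      IsAscPartition (6 * t + 3) (2 * t + 1) p ∧
      (∀ i, 1 ≤ i → i ≤ e → p i = 2) ∧
      (∀ i, e + 1 ≤ i → i ≤ e + 2 → p i = 3) ∧
      (∀ j, 1 ≤ j → j ≤ 2 * t → 0 ≤ slack (6 * t + 3) (2 * t + 1) p j) ∧
      ¬ Equitable (6 * t + 3) (2 * t + 1) p := by
  obtain ⟨u, rfl⟩ := ht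
  obtain rfl : e = 3 * u := by omega
  have hu : 3 ≤ u := by omega
  rw [show 6 * (u + u) + 3 = 12 * u + 3 by ring, show 2 * (u + u) + 1 = 4 * u + 1 by ring,
    show 2 * (u + u) = 4 * u by ring]
  refine ⟨counterPartition u, counterPartition.isAscPartition (by omega), fun i _ hi => if_pos hi,
    fun i h₁ h₂ => ?_, fun j _ hj => counterPartition.slack_nonneg hu hj,
    counterPartition.not_equitable (by omega)⟩
  simp only [counterPartition]
  split_ifs <;> omega
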